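/- Let (X_n)_{n≥1} be a sequence of i.i.d. random variables with expectation μ, satisfying 0 ≤ X_n ≤ B almost surely for some constant B > 0. Then for every δ ∈ (0,1), with probability at least 1 − δ, simultaneously for all n ≥ 1 it holds that |∑_{i=1}^n (X_i − μ)| ≤ 2·√(B·(∑_{i=1}^n X_i)·log(2n/δ)) + 7·B·log(2n/δ). -/

import Mathlib

open MeasureTheory ProbabilityTheory Finset Real
open scoped Nat

/-!
For `0 ≤ X ≤ B` with mean `m`, convexity of `exp` gives Bennett's bound
`𝔼 e^{lX} ≤ exp (m (e^{lB} - 1) / B)`, so a sum `S_n` of `n` independent such variables has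
variance proxy `v = n m B`. The Chernoff method with `e^u - 1 - u ≤ u² / (2 (1 - u / 3))` then
gives Bernstein's inequality `P(|S_n - n m| ≥ √(2 t v) + 2 B t / 3) ≤ 2 e^{-t}`. Choosing
`t = 2 log (2n/δ)` makes the failure probabilities `δ² / (2n²)`, whose sum `δ² π² / 12` is at
most `δ`. Finally, on the good event the inequality is quadratic in `√(n m)`; solving it
replaces the unknown `n m` under the square root by the observed sum.
-/

lemma exp_sub_one_sub_le {u : ℝ} (hu : 0 ≤ u) (hu3 : u < 3) :
    exp u - 1 - u ≤ u ^ 2 / (2 * (1 - u / 3)) := by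
  have hexp : HasSum (fun n ↦ u ^ (n + 2) / (n + 2)!) (exp u - 1 - u) := by
    have := (hasSum_nat_add_iff' 2).2 (exp_eq_exp_ℝ ▸ NormedSpace.expSeries_div_hasSum_exp u)
    simpa [sum_range_succ, sub_sub] using this
  have hgeom : HasSum (fun n ↦ u ^ 2 / 2 * (u / 3) ^ n) (u ^ 2 / 2 * (1 - u / 3)⁻¹) :=
    (hasSum_geometric_of_lt_one (by positivity) (by linarith)).mul_left _
  calc exp u - 1 - u ≤ u ^ 2 / 2 * (1 - u / 3)⁻¹ := hasSum_le (fun n ↦ ?_) hexp hgeom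
    _ = u ^ 2 / (2 * (1 - u / 3)) := by field_simp
  -- `2 * 3 ^ n ≤ (n + 2)!` makes the exponential series dominated by a geometric one
  have hfact : (2 * 3 ^ n : ℝ) ≤ (n + 2)! := by
    exact_mod_cast (Nat.factorial_mul_pow_le_factorial (m := 2) (n := n)).trans_eq
      (by rw [add_comm])
  calc u ^ (n + 2) / (n + 2)! ≤ u ^ (n + 2) / (2 * 3 ^ n) := by gcongr
    _ = u ^ 2 / 2 * (u / 3) ^ n := by rw [div_pow]; ring

lemma exp_neg_sub_one_add_le {u : ℝ} (hu : 0 ≤ u) : exp (-u) - 1 + u ≤ exp u - 1 - u := by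
  have := self_le_sinh_iff.2 hu
  rw [sinh_eq] at this
  linarith

lemma exp_mul_le_of_mem_Icc {B x : ℝ} (hB : 0 < B) (hx : x ∈ Set.Icc 0 B) (l : ℝ) :
    exp (l * x) ≤ 1 + x / B * (exp (l * B) - 1) := by
  have h := convexOn_exp.2 (Set.mem_univ 0) (Set.mem_univ (l * B))
    (sub_nonneg.2 ((div_le_one hB).2 hx.2)) (div_nonneg hx.1 hB.le) (sub_add_cancel 1 (x / B))
  simp only [smul_eq_mul, mul_zero, zero_add, exp_zero] at h
  rw [show x / B * (l * B) = l * x by field_simp] at h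
  linarith

lemma exists_bernstein_exponent {v B a : ℝ} (hv : 0 ≤ v) (hB : 0 < B) (ha : 0 < a) :
    ∃ l, 0 ≤ l ∧
      v / B ^ 2 * (exp (l * B) - 1 - l * B) - l * a ≤ -(a ^ 2 / (2 * (v + B * a / 3))) := by
  set d := v + B * a / 3 with hd_def
  have hd : 0 < d := by positivity
  -- for `l = a / d` the bound `e^u - 1 - u ≤ u² / (2 (1 - u / 3))` collapses to `a² / (2d)`
  refine ⟨a / d, by positivity, ?_⟩
  have hquad : v / B ^ 2 * (exp (a / d * B) - 1 - a / d * B) ≤ a ^ 2 / (2 * d) := by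
    rcases hv.eq_or_lt with rfl | hv
    · simp only [zero_div, zero_mul]; positivity
    have h3 : a / d * B < 3 := by rw [div_mul_eq_mul_div, div_lt_iff₀ hd, hd_def]; linarith
    calc v / B ^ 2 * (exp (a / d * B) - 1 - a / d * B)
        ≤ v / B ^ 2 * ((a / d * B) ^ 2 / (2 * (1 - a / d * B / 3))) := by
          gcongr; exact exp_sub_one_sub_le (by positivity) h3
      _ = a ^ 2 / (2 * d) := by
          have : 1 - a / d * B / 3 = v / d := by field_simp; ring
          rw [this]; field_simp
  have : a / d * a = a ^ 2 / d := by ring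
  linarith [show a ^ 2 / d = 2 * (a ^ 2 / (2 * d)) by field_simp]

/-- Bernstein's deviation at confidence level `e^{-t}`, for variance proxy `v` and range `B`. -/
noncomputable def bernsteinRadius (v B t : ℝ) : ℝ := √(2 * t * v) + 2 * B * t / 3

lemma bernsteinRadius_pos {v B t : ℝ} (hB : 0 < B) (ht : 0 < t) : 0 < bernsteinRadius v B t := by
  unfold bernsteinRadius; positivity

lemma le_sq_div_bernsteinRadius {v B t : ℝ} (hv : 0 ≤ v) (hB : 0 < B) (ht : 0 < t) :
    t ≤ bernsteinRadius v B t ^ 2 / (2 * (v + B * bernsteinRadius v B t / 3)) := by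
  have ha := bernsteinRadius_pos (v := v) hB ht
  rw [le_div_iff₀ (by positivity)]
  -- `a ^ 2 - 2 t (v + B a / 3) = 2 B t √(2 t v) / 3`
  have hsq : √(2 * t * v) ^ 2 = 2 * t * v := sq_sqrt (by positivity)
  unfold bernsteinRadius
  nlinarith [sqrt_nonneg (2 * t * v), mul_pos hB ht]

lemma abs_sub_le_of_abs_sub_le_bernsteinRadius {B L s x : ℝ} (hB : 0 ≤ B) (hL : 0 ≤ L)
    (hs : 0 ≤ s) (hx : 0 ≤ x) (h : |s - x| ≤ bernsteinRadius (x * B) B (2 * L)) :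
    |s - x| ≤ 2 * √(B * s * L) + 7 * B * L := by
  obtain ⟨u, hu, hu2⟩ : ∃ u, 0 ≤ u ∧ u ^ 2 = B * L :=
    ⟨√(B * L), sqrt_nonneg _, sq_sqrt (by positivity)⟩
  obtain ⟨q, hq, rfl⟩ : ∃ q, 0 ≤ q ∧ q ^ 2 = x := ⟨√x, sqrt_nonneg _, sq_sqrt hx⟩
  obtain ⟨r, hr, rfl⟩ : ∃ r, 0 ≤ r ∧ r ^ 2 = s := ⟨√s, sqrt_nonneg _, sq_sqrt hs⟩
  have hradius : bernsteinRadius (q ^ 2 * B) B (2 * L) = 2 * (u * q) + 4 / 3 * u ^ 2 := by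
    rw [bernsteinRadius, show 2 * (2 * L) * (q ^ 2 * B) = (2 * (u * q)) ^ 2 by
      rw [mul_pow, mul_pow, hu2]; ring, sqrt_sq (by positivity)]
    rw [hu2]; ring
  rw [hradius] at h
  have hsqrt : √(B * r ^ 2 * L) = u * r := by
    rw [show B * r ^ 2 * L = (u * r) ^ 2 by rw [mul_pow, hu2]; ring, sqrt_sq (by positivity)]
  -- `q ^ 2 ≤ r ^ 2 + 2 u q + 4 u ^ 2 / 3` forces `q ≤ r + 8 u / 3`
  have hq_le : q ≤ r + 8 / 3 * u := by
    by_contra! hlt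
    have := (abs_le.1 h).1
    nlinarith [mul_nonneg hr hu, mul_nonneg hu (sub_nonneg.2 hlt.le)]
  rw [hsqrt, mul_assoc 7, ← hu2]
  nlinarith [mul_le_mul_of_nonneg_left hq_le hu, (abs_le.1 h).2]

lemma hasSum_one_div_nat_add_one_sq :
    HasSum (fun n : ℕ ↦ 1 / ((n : ℝ) + 1) ^ 2) (π ^ 2 / 6) := by
  simpa using (hasSum_nat_add_iff' 1).2 hasSum_zeta_two

section Probability

variable {Ω : Type*} {m0 : MeasurableSpace Ω} {μ : Measure Ω}

lemma measureReal_ge_le_exp_bernstein [IsFiniteMeasure μ] {Y : Ω → ℝ} {c v B a : ℝ}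
    (hv : 0 ≤ v) (hB : 0 < B) (ha : 0 < a)
    (hint : ∀ l, 0 ≤ l → Integrable (fun ω ↦ exp (l * Y ω)) μ)
    (hmgf : ∀ l, 0 ≤ l → mgf Y μ l ≤ exp (l * c + v / B ^ 2 * (exp (l * B) - 1 - l * B))) :
    μ.real {ω | c + a ≤ Y ω} ≤ exp (-(a ^ 2 / (2 * (v + B * a / 3)))) := by
  obtain ⟨l, hl, hexponent⟩ := exists_bernstein_exponent hv hB ha
  calc μ.real {ω | c + a ≤ Y ω} ≤ exp (-l * (c + a)) * mgf Y μ l :=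
        measure_ge_le_exp_mul_mgf _ hl (hint l hl)
    _ ≤ exp (-l * (c + a)) * exp (l * c + v / B ^ 2 * (exp (l * B) - 1 - l * B)) := by
        gcongr; exact hmgf l hl
    _ = exp (v / B ^ 2 * (exp (l * B) - 1 - l * B) - l * a) := by rw [← exp_add]; ring_nf
    _ ≤ _ := exp_le_exp.2 hexponent

lemma measure_ge_add_bernsteinRadius_le [IsFiniteMeasure μ] {Y : Ω → ℝ} {c v B t : ℝ}
    (hv : 0 ≤ v) (hB : 0 < B) (ht : 0 < t)
    (hint : ∀ l, 0 ≤ l → Integrable (fun ω ↦ exp (l * Y ω)) μ)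
    (hmgf : ∀ l, 0 ≤ l → mgf Y μ l ≤ exp (l * c + v / B ^ 2 * (exp (l * B) - 1 - l * B))) :
    μ {ω | c + bernsteinRadius v B t ≤ Y ω} ≤ ENNReal.ofReal (exp (-t)) := by
  rw [← ofReal_measureReal]
  gcongr
  refine (measureReal_ge_le_exp_bernstein hv hB (bernsteinRadius_pos hB ht) hint hmgf).trans ?_
  gcongr
  exact le_sq_div_bernsteinRadius hv hB ht

variable [IsProbabilityMeasure μ]

lemma mgf_le_exp_of_mem_Icc {X : Ω → ℝ} {B m : ℝ} (hB : 0 < B) (hX : AEMeasurable X μ)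
    (hmean : ∫ ω, X ω ∂μ = m) (hbdd : ∀ᵐ ω ∂μ, X ω ∈ Set.Icc 0 B) (l : ℝ) :
    mgf X μ l ≤ exp (m / B * (exp (l * B) - 1)) := by
  have hXint : Integrable X μ := .of_mem_Icc 0 B hX hbdd
  calc mgf X μ l ≤ ∫ ω, 1 + X ω / B * (exp (l * B) - 1) ∂μ :=
        integral_mono_ae (integrable_exp_mul_of_mem_Icc hX hbdd)
          ((integrable_const 1).add ((hXint.div_const B).mul_const _))
          (hbdd.mono fun ω hω ↦ exp_mul_le_of_mem_Icc hB hω l)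
    _ = 1 + m / B * (exp (l * B) - 1) := by
        rw [integral_add (integrable_const 1) ((hXint.div_const B).mul_const _),
          integral_mul_const, integral_div, hmean]
        simp
    _ ≤ exp (m / B * (exp (l * B) - 1)) := by
        linarith [add_one_le_exp (m / B * (exp (l * B) - 1))]

section Sum

variable {ι : Type*} {X : ι → Ω → ℝ} {B m : ℝ}

-- Bennett's bound for the sum, with variance proxy `#s * m * B`
lemma mgf_sum_le_exp_bernstein (hB : 0 < B) (hmeas : ∀ i, Measurable (X i))
    (hindep : iIndepFun X μ) (hmean : ∀ i, ∫ ω, X i ω ∂μ = m)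
    (hbdd : ∀ i, ∀ᵐ ω ∂μ, X i ω ∈ Set.Icc 0 B) (s : Finset ι) (l : ℝ) :
    mgf (∑ i ∈ s, X i) μ l ≤
      exp (l * (#s * m) + #s * m * B / B ^ 2 * (exp (l * B) - 1 - l * B)) := by
  rw [hindep.mgf_sum hmeas]
  calc ∏ i ∈ s, mgf (X i) μ l ≤ ∏ _i ∈ s, exp (m / B * (exp (l * B) - 1)) :=
        prod_le_prod (fun _ _ ↦ mgf_nonneg)
          (fun i _ ↦ mgf_le_exp_of_mem_Icc hB (hmeas i).aemeasurable (hmean i) (hbdd i) l)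
    _ = _ := by
        rw [prod_const, ← exp_nat_mul]
        congr 1
        field_simp
        ring

lemma measure_bernsteinRadius_le_abs_sum_sub (hB : 0 < B) (hmeas : ∀ i, Measurable (X i))
    (hindep : iIndepFun X μ) (hmean : ∀ i, ∫ ω, X i ω ∂μ = m)
    (hbdd : ∀ i, ∀ᵐ ω ∂μ, X i ω ∈ Set.Icc 0 B) (s : Finset ι) {t : ℝ} (ht : 0 < t) :
    μ {ω | bernsteinRadius (#s * m * B) B t ≤ |∑ i ∈ s, X i ω - #s * m|} ≤
      ENNReal.ofReal (2 * exp (-t)) := by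
  have hv : 0 ≤ (#s : ℝ) * m * B := by
    have hsum : (#s : ℝ) * m = ∑ i ∈ s, ∫ ω, X i ω ∂μ := by simp [hmean]
    rw [hsum]
    have := sum_nonneg fun i (_ : i ∈ s) ↦
      integral_nonneg_of_ae ((hbdd i).mono fun ω hω ↦ hω.1)
    positivity
  have hint : ∀ l, Integrable (fun ω ↦ exp (l * (∑ i ∈ s, X i) ω)) μ := fun l ↦
    hindep.integrable_exp_mul_sum hmeas fun i _ ↦
      integrable_exp_mul_of_mem_Icc (hmeas i).aemeasurable (hbdd i)
  have hmgf := mgf_sum_le_exp_bernstein hB hmeas hindep hmean hbdd s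
  have hupper := measure_ge_add_bernsteinRadius_le (c := #s * m) hv hB ht
    (fun l _ ↦ hint l) fun l _ ↦ hmgf l
  have hlower := measure_ge_add_bernsteinRadius_le (c := -(#s * m)) (Y := -∑ i ∈ s, X i) hv hB ht
    (fun l _ ↦ by simpa using hint (-l)) fun l hl ↦ by
      rw [mgf_neg]
      refine (hmgf (-l)).trans (exp_le_exp.2 ?_)
      have := mul_le_mul_of_nonneg_left (exp_neg_sub_one_add_le (mul_nonneg hl hB.le))
        (by positivity : (0 : ℝ) ≤ #s * m * B / B ^ 2)
      simp only [neg_mul, sub_neg_eq_add]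
      linarith
  calc _ ≤ μ ({ω | #s * m + bernsteinRadius (#s * m * B) B t ≤ (∑ i ∈ s, X i) ω} ∪
        {ω | -(#s * m) + bernsteinRadius (#s * m * B) B t ≤ (-∑ i ∈ s, X i) ω}) := by
        refine measure_mono fun ω hω ↦ ?_
        simp only [Set.mem_ofPred_eq, Set.mem_union, le_abs', Finset.sum_apply, Pi.neg_apply]
          at hω ⊢
        rcases hω with h | h
        · right; linarith
        · left; linarith
    _ ≤ ENNReal.ofReal (exp (-t)) + ENNReal.ofReal (exp (-t)) :=
        (measure_union_le _ _).trans (add_le_add hupper hlower)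
    _ = ENNReal.ofReal (2 * exp (-t)) := by
        rw [← ENNReal.ofReal_add (exp_pos _).le (exp_pos _).le, two_mul]

end Sum

lemma ofReal_one_sub_le_measure_compl {s : Set Ω} {δ : ℝ}
    (hδ : 0 ≤ δ) (hs : μ s ≤ ENNReal.ofReal δ) : ENNReal.ofReal (1 - δ) ≤ μ sᶜ := by
  rw [ENNReal.ofReal_sub 1 hδ, ENNReal.ofReal_one, tsub_le_iff_right, ← measure_univ (μ := μ)]
  exact (measure_univ_le_add_compl s).trans (by rw [add_comm]; gcongr)

lemma ofReal_one_sub_le_measure_forall_notMem {E : ℕ → Set Ω} {δ : ℝ}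
    (hδ0 : 0 ≤ δ) (hδ1 : δ ≤ 1)
    (hE : ∀ n : ℕ, 1 ≤ n → μ (E n) ≤ ENNReal.ofReal (δ ^ 2 / (2 * n ^ 2))) :
    ENNReal.ofReal (1 - δ) ≤ μ {ω | ∀ n, 1 ≤ n → ω ∉ E n} := by
  have hsum := hasSum_one_div_nat_add_one_sq.mul_left (δ ^ 2 / 2)
  have hunion : μ (⋃ n, E (n + 1)) ≤ ENNReal.ofReal δ := calc
    μ (⋃ n, E (n + 1)) ≤ ∑' n, μ (E (n + 1)) := measure_iUnion_le _
    _ ≤ ∑' n : ℕ, ENNReal.ofReal (δ ^ 2 / 2 * (1 / ((n : ℝ) + 1) ^ 2)) :=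
        ENNReal.tsum_le_tsum fun n ↦
          (hE (n + 1) (by omega)).trans_eq (by push_cast; congr 1; field_simp)
    _ = ENNReal.ofReal (δ ^ 2 / 2 * (π ^ 2 / 6)) := by
        rw [← ENNReal.ofReal_tsum_of_nonneg (fun _ ↦ by positivity) hsum.summable, hsum.tsum_eq]
    _ ≤ ENNReal.ofReal δ := ENNReal.ofReal_le_ofReal <| by
        have hπ : π ^ 2 < 12 := by nlinarith [pi_lt_d2, pi_pos]
        nlinarith [mul_le_mul_of_nonneg_left hδ1 hδ0, sq_nonneg δ]
  refine (ofReal_one_sub_le_measure_compl hδ0 hunion).trans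
    (measure_mono fun ω hω n hn hωn ↦ ?_)
  obtain ⟨k, rfl⟩ := Nat.exists_eq_add_of_le' hn
  exact hω (Set.mem_iUnion.2 ⟨k, hωn⟩)

end Probability

theorem anytime_bernstein_empirical_general
    {Ω : Type*} {m0 : MeasurableSpace Ω} {μ : Measure Ω} [IsProbabilityMeasure μ]
    (X : ℕ → Ω → ℝ) (B m : ℝ) (hB : 0 < B)
    (hmeas : ∀ i, Measurable (X i))
    (hindep : iIndepFun X μ)
    (hmean : ∀ i, ∫ ω, X i ω ∂μ = m)
    (hbdd : ∀ i, ∀ᵐ ω ∂μ, X i ω ∈ Set.Icc (0 : ℝ) B)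
    (δ : ℝ) (hδ : δ ∈ Set.Ioo (0 : ℝ) 1) :
    ENNReal.ofReal (1 - δ) ≤
      μ {ω | ∀ n : ℕ, 1 ≤ n →
        |∑ i ∈ Finset.Icc 1 n, (X i ω - m)| ≤
          2 * Real.sqrt (B * (∑ i ∈ Finset.Icc 1 n, X i ω) * Real.log (2 * n / δ)) +
            7 * B * Real.log (2 * n / δ)} := by
  obtain ⟨hδ0, hδ1⟩ := hδ
  have hm : 0 ≤ m := hmean 0 ▸ integral_nonneg_of_ae ((hbdd 0).mono fun _ hω ↦ hω.1)
  have hlog : ∀ n : ℕ, 1 ≤ n → 0 < log (2 * n / δ) := fun n hn ↦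
    log_pos <| (one_lt_div hδ0).2 (by linarith [show (1 : ℝ) ≤ n by exact_mod_cast hn])
  have hcard : ∀ n : ℕ, (#(Icc 1 n) : ℝ) = n := by simp
  -- at time `n` use the confidence level `t = 2 log (2n/δ)`, for which `2 e^{-t} = δ² / (2n²)`
  refine (ofReal_one_sub_le_measure_forall_notMem hδ0.le hδ1.le (E := fun n ↦
    {ω | bernsteinRadius (#(Icc 1 n) * m * B) B (2 * log (2 * n / δ)) ≤
      |∑ i ∈ Icc 1 n, X i ω - #(Icc 1 n) * m|}) fun n hn ↦ ?_).trans (measure_mono_ae ?_)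
  · refine (measure_bernsteinRadius_le_abs_sum_sub hB hmeas hindep hmean hbdd _
      (by linarith [hlog n hn])).trans_eq (congrArg ENNReal.ofReal ?_)
    have hn0 : (0 : ℝ) < n := by exact_mod_cast hn
    rw [exp_neg, two_mul (log _), exp_add, exp_log (by positivity)]
    field_simp
  · filter_upwards [ae_all_iff.2 hbdd] with ω hω hgood n hn
    have hdev := not_le.1 (hgood n hn)
    rw [hcard] at hdev
    rw [sum_sub_distrib, sum_const, nsmul_eq_mul, hcard]
    exact abs_sub_le_of_abs_sub_le_bernsteinRadius hB.le (hlog n hn).le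
      (sum_nonneg fun i _ ↦ (hω i).1) (by positivity) hdev.le

/-- Empirical (data-dependent) anytime Bernstein inequality: for an i.i.d. sequence
`(X n)` with expectation `m` and `0 ≤ X n ≤ B` almost surely, with probability at least
`1 - δ`, simultaneously for all `n ≥ 1`,
`|∑_{i=1}^n (X i - m)| ≤ 2√(B (∑_{i=1}^n X i) log(2n/δ)) + 7 B log(2n/δ)`. -/
theorem anytime_bernstein_empirical
    {Ω : Type*} {m0 : MeasurableSpace Ω} {μ : Measure Ω} [IsProbabilityMeasure μ]
    (X : ℕ → Ω → ℝ) (B m : ℝ) (hB : 0 < B)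
    (hmeas : ∀ i, Measurable (X i))
    (hindep : iIndepFun X μ)
    (hident : ∀ i j, IdentDistrib (X i) (X j) μ μ)
    (hmean : ∀ i, ∫ ω, X i ω ∂μ = m)
    (hbdd : ∀ i, ∀ᵐ ω ∂μ, X i ω ∈ Set.Icc (0 : ℝ) B)
    (δ : ℝ) (hδ : δ ∈ Set.Ioo (0 : ℝ) 1) :
    ENNReal.ofReal (1 - δ) ≤
      μ {ω | ∀ n : ℕ, 1 ≤ n →
        |∑ i ∈ Finset.Icc 1 n, (X i ω - m)| ≤
          2 * Real.sqrt (B * (∑ i ∈ Finset.Icc 1 n, X i ω) * Real.log (2 * n / δ)) +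
            7 * B * Real.log (2 * n / δ)} :=
  anytime_bernstein_empirical_general (m0 := m0) X B m hB hmeas hindep hmean hbdd δ hδ
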